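/- Let 𝒜 be a finite set, Δ > 0, and consider Bernoulli bandit environments. For the base environment ν with μ_ν(1) = 1/2 + Δ and μ_ν(a) = 1/2 for a ≠ 1, and for each a₀ ≠ 1 an alternative ν^{a₀} with μ_{ν^{a₀}}(1) = 1/2 + Δ, μ_{ν^{a₀}}(a₀) = 1/2 + 2Δ, and μ_{ν^{a₀}}(a) = 1/2 for a ∉ {1, a₀}: for any T-round policy π, R_T(ν,π) + R_T(ν^{a₀},π) ≥ (TΔ/2)·P_{ν,π}[N_T(1) ≤ T/2] + (TΔ/2)·P_{ν^{a₀},π}[N_T(1) > T/2]. -/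

import Mathlib

open Finset

variable {α : Type*}

/-- The probability of a `T`-round history `h` under per-action observation pmfs `ν`
and history-dependent policy `π`. -/
def histProb [Fintype α] (T : ℕ)
    (π : (t : ℕ) → (Fin t → α × Bool) → α → ℝ) (ν : α → Bool → ℝ)
    (h : Fin T → α × Bool) : ℝ :=
  ∏ t : Fin T,
    π t.1 (fun s : Fin t.1 => h ⟨s.1, s.2.trans t.2⟩) (h t).1 * ν (h t).1 (h t).2

/-- The number of rounds among the `T`-round history `h` on which action `a` is played. -/
def numPlays [Fintype α] [DecidableEq α] (T : ℕ) (h : Fin T → α × Bool) (a : α) : ℕ :=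
  (Finset.univ.filter fun t : Fin T => (h t).1 = a).card

/-- Bernoulli observation pmf with means `m`. -/
def bern (m : α → ℝ) : α → Bool → ℝ := fun a x => if x then m a else 1 - m a

/-! Along a fixed history the regret in the base environment is at least `Δ` times the number
of rounds not spent on arm `a1`, and in the alternative at least `Δ` times the number of rounds
spent on `a1`; on the two events in question each count is at least `T / 2`, and the regret is
nonnegative on every history. Averaging over histories, whose weights form a probability
distribution, gives the two bounds. -/

theorem histProb_nonneg [Fintype α] {T : ℕ} {π : (t : ℕ) → (Fin t → α × Bool) → α → ℝ}
    {ν : α → Bool → ℝ} (hπ : ∀ t hist a, 0 ≤ π t hist a) (hν : ∀ a x, 0 ≤ ν a x)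
    (h : Fin T → α × Bool) : 0 ≤ histProb T π ν h :=
  Finset.prod_nonneg fun _ _ => mul_nonneg (hπ _ _ _) (hν _ _)

theorem histProb_cons [Fintype α] {T : ℕ} (π : (t : ℕ) → (Fin t → α × Bool) → α → ℝ)
    (ν : α → Bool → ℝ) (x : α × Bool) (g : Fin T → α × Bool) :
    histProb (T + 1) π ν (Fin.cons x g) =
      π 0 Fin.elim0 x.1 * ν x.1 x.2 *
        histProb T (fun t hist => π (t + 1) (Fin.cons x hist)) ν g := by
  simp only [histProb, Fin.prod_univ_succ, Fin.cons_zero, Fin.cons_succ, Fin.val_zero,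
    Fin.val_succ]
  congr 2
  · exact congrArg (π 0 · x.1) (funext fun s => s.elim0)
  · funext t
    congr 2
    funext s
    exact Fin.cases rfl (fun _ => rfl) s

theorem sum_histProb_eq_one [Fintype α] {ν : α → Bool → ℝ} (hν : ∀ a, ∑ x, ν a x = 1) :
    ∀ (T : ℕ) (π : (t : ℕ) → (Fin t → α × Bool) → α → ℝ),
      (∀ t hist, ∑ a, π t hist a = 1) → ∑ h, histProb T π ν h = 1
  | 0, π, _ => by simp [histProb]
  | T + 1, π, hπ => by
    rw [← (Fin.consEquiv fun _ => α × Bool).sum_comp, Fintype.sum_prod_type]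
    simp only [Fin.consEquiv, Equiv.coe_fn_mk, histProb_cons, ← Finset.mul_sum,
      sum_histProb_eq_one hν T _ fun t _ => hπ (t + 1) _, mul_one, Fintype.sum_prod_type,
      hν, hπ]

theorem bern_nonneg {m : α → ℝ} (hm : ∀ a, m a ∈ Set.Icc 0 1) (a : α) (x : Bool) :
    0 ≤ bern m a x := by
  cases x <;> simp [bern, (hm a).1, (hm a).2]

theorem sum_bern (m : α → ℝ) (a : α) : ∑ x, bern m a x = 1 := by
  simp [bern]

theorem mul_sum_le_sum_mul_of_le {ι : Type*} [Fintype ι] {w g : ι → ℝ} {c : ℝ}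
    {s : Finset ι} (hw : ∀ i, 0 ≤ w i) (hg : ∀ i, 0 ≤ g i) (hc : ∀ i ∈ s, c ≤ g i) :
    c * ∑ i ∈ s, w i ≤ ∑ i, w i * g i :=
  calc c * ∑ i ∈ s, w i = ∑ i ∈ s, w i * c := by rw [Finset.mul_sum]; simp only [mul_comm]
    _ ≤ ∑ i ∈ s, w i * g i := Finset.sum_le_sum fun i hi => by gcongr; exacts [hw i, hc i hi]
    _ ≤ ∑ i, w i * g i :=
      Finset.sum_le_sum_of_subset_of_nonneg s.subset_univ fun i _ _ => mul_nonneg (hw i) (hg i)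

theorem sub_sum_mul_eq_sum_mul_sub {ι : Type*} [Fintype ι] {w : ι → ℝ} (hw : ∑ i, w i = 1)
    (c : ℝ) (f : ι → ℝ) : c - ∑ i, w i * f i = ∑ i, w i * (c - f i) := by
  simp only [mul_sub, Finset.sum_sub_distrib, ← Finset.sum_mul, hw, one_mul]

theorem mul_card_le_regret {T : ℕ} {m : α → ℝ} {c δ : ℝ} (hmc : ∀ a, m a ≤ c)
    (p : α → Prop) [DecidablePred p] (hgap : ∀ a, p a → δ ≤ c - m a) (f : Fin T → α) :
    δ * #{t | p (f t)} ≤ T * c - ∑ t, m (f t) := by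
  have h := mul_sum_le_sum_mul_of_le (w := fun _ => (1 : ℝ)) (g := fun t => c - m (f t))
    (s := {t | p (f t)}) (fun _ => zero_le_one) (fun t => sub_nonneg.2 (hmc _))
    (fun t ht => hgap _ (Finset.mem_filter.1 ht).2)
  simpa [Finset.sum_sub_distrib] using h

theorem mul_prob_le_regret [Fintype α] {T : ℕ} {π : (t : ℕ) → (Fin t → α × Bool) → α → ℝ}
    (hπ0 : ∀ t hist a, 0 ≤ π t hist a) (hπ1 : ∀ t hist, ∑ a, π t hist a = 1)
    {m : α → ℝ} {c : ℝ} (hm : ∀ a, m a ∈ Set.Icc 0 c) (hc : c ≤ 1)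
    {s : Finset (Fin T → α × Bool)} {b : ℝ}
    (hb : ∀ h ∈ s, b ≤ T * c - ∑ t, m (h t).1) :
    b * ∑ h ∈ s, histProb T π (bern m) h ≤
      T * c - ∑ h, histProb T π (bern m) h * ∑ t, m (h t).1 := by
  rw [sub_sum_mul_eq_sum_mul_sub (sum_histProb_eq_one (sum_bern m) T π hπ1)]
  refine mul_sum_le_sum_mul_of_le (fun h => histProb_nonneg hπ0 (bern_nonneg ?_) h)
    (fun h => ?_) hb
  · exact fun a => ⟨(hm a).1, (hm a).2.trans hc⟩
  · simpa using mul_card_le_regret (δ := 0) (fun a => (hm a).2) (fun _ => True)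
      (fun a _ => sub_nonneg.2 (hm a).2) (fun t => (h t).1)

theorem numPlays_add_card_ne [Fintype α] [DecidableEq α] {T : ℕ} (h : Fin T → α × Bool)
    (a : α) : numPlays T h a + #{t | (h t).1 ≠ a} = T := by
  rw [numPlays, Finset.card_filter_add_card_filter_not, Finset.card_univ,
    Fintype.card_fin]

theorem mul_half_le_regret_of_two_mul_numPlays_le [Fintype α] [DecidableEq α] {T : ℕ}
    {m : α → ℝ} {a₁ : α} {c Δ : ℝ} (hmc : ∀ a, m a ≤ c) (hgap : ∀ a, a ≠ a₁ → Δ ≤ c - m a)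
    (hΔ : 0 ≤ Δ) {h : Fin T → α × Bool} (hh : 2 * numPlays T h a₁ ≤ T) :
    T * Δ / 2 ≤ T * c - ∑ t, m (h t).1 := by
  have hpulls := mul_card_le_regret hmc (· ≠ a₁) hgap fun t => (h t).1
  have hN : (numPlays T h a₁ : ℝ) + #{t | (h t).1 ≠ a₁} = T := by
    exact_mod_cast numPlays_add_card_ne h a₁
  have hT : 2 * (numPlays T h a₁ : ℝ) ≤ T := by exact_mod_cast hh
  nlinarith

theorem mul_half_le_regret_of_lt_two_mul_numPlays [Fintype α] [DecidableEq α] {T : ℕ}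
    {m : α → ℝ} {a₁ : α} {c Δ : ℝ} (hmc : ∀ a, m a ≤ c) (hgap : Δ ≤ c - m a₁)
    (hΔ : 0 ≤ Δ) {h : Fin T → α × Bool} (hh : T < 2 * numPlays T h a₁) :
    T * Δ / 2 ≤ T * c - ∑ t, m (h t).1 := by
  have hpulls := mul_card_le_regret hmc (· = a₁) (fun a ha => ha ▸ hgap) fun t => (h t).1
  have hT : (T : ℝ) < 2 * numPlays T h a₁ := by exact_mod_cast hh
  rw [numPlays] at hT
  nlinarith

theorem two_environment_regret_bound_general [Fintype α] [DecidableEq α]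
    (a1 a0 : α) (Δ : ℝ) (hΔ : 0 < Δ) (hΔ4 : Δ ≤ 1 / 4)
    (T : ℕ) (π : (t : ℕ) → (Fin t → α × Bool) → α → ℝ)
    (hπ0 : ∀ t hist a, 0 ≤ π t hist a) (hπ1 : ∀ t hist, ∑ a, π t hist a = 1)
    (mbase malt : α → ℝ)
    (hb1 : mbase a1 = 1 / 2 + Δ) (hb : ∀ a, a ≠ a1 → mbase a = 1 / 2)
    (ha1 : malt a1 = 1 / 2 + Δ) (ha0 : malt a0 = 1 / 2 + 2 * Δ)
    (ha : ∀ a, a ≠ a1 → a ≠ a0 → malt a = 1 / 2) :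
    ((T : ℝ) * (1 / 2 + Δ) -
        ∑ h : Fin T → α × Bool,
          histProb T π (bern mbase) h * ∑ t : Fin T, mbase (h t).1) +
      ((T : ℝ) * (1 / 2 + 2 * Δ) -
        ∑ h : Fin T → α × Bool,
          histProb T π (bern malt) h * ∑ t : Fin T, malt (h t).1) ≥
      ((T : ℝ) * Δ / 2) *
          (∑ h ∈ Finset.univ.filter
              (fun h : Fin T → α × Bool => 2 * numPlays T h a1 ≤ T),
            histProb T π (bern mbase) h) +
        ((T : ℝ) * Δ / 2) *
          (∑ h ∈ Finset.univ.filter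
              (fun h : Fin T → α × Bool => T < 2 * numPlays T h a1),
            histProb T π (bern malt) h) := by
  have hbase : ∀ a, mbase a ∈ Set.Icc 0 (1 / 2 + Δ) := fun a => by
    by_cases h1 : a = a1
    · subst h1; constructor <;> linarith
    · rw [hb a h1]; constructor <;> linarith
  have halt : ∀ a, malt a ∈ Set.Icc 0 (1 / 2 + 2 * Δ) := fun a => by
    by_cases h1 : a = a1
    · subst h1; constructor <;> linarith
    by_cases h0 : a = a0
    · subst h0; constructor <;> linarith
    · rw [ha a h1 h0]; constructor <;> linarith
  have hregret_base := mul_prob_le_regret (s := {h | 2 * numPlays T h a1 ≤ T}) hπ0 hπ1 hbase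
    (by linarith) fun h hh =>
    mul_half_le_regret_of_two_mul_numPlays_le (fun a => (hbase a).2)
      (fun a ha => by rw [hb a ha]; linarith) hΔ.le (Finset.mem_filter.1 hh).2
  have hregret_alt := mul_prob_le_regret (s := {h | T < 2 * numPlays T h a1}) hπ0 hπ1 halt
    (by linarith) fun h hh =>
    mul_half_le_regret_of_lt_two_mul_numPlays (fun a => (halt a).2)
      (by rw [ha1]; linarith) hΔ.le (Finset.mem_filter.1 hh).2
  linarith

/-- Two-environment regret lower bound: for the base Bernoulli environment with
`μ(1) = 1/2 + Δ` and all other means `1/2`, and the alternative with additionally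
`μ(a₀) = 1/2 + 2Δ`, any policy satisfies
`R_T(ν,π) + R_T(ν^{a₀},π) ≥ (TΔ/2)·P_ν[N_T(1) ≤ T/2] + (TΔ/2)·P_{ν^{a₀}}[N_T(1) > T/2]`. -/
theorem two_environment_regret_bound [Fintype α] [DecidableEq α]
    (a1 a0 : α) (hne : a0 ≠ a1) (Δ : ℝ) (hΔ : 0 < Δ) (hΔ4 : Δ ≤ 1 / 4)
    (T : ℕ) (π : (t : ℕ) → (Fin t → α × Bool) → α → ℝ)
    (hπ0 : ∀ t hist a, 0 ≤ π t hist a) (hπ1 : ∀ t hist, ∑ a, π t hist a = 1)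
    (mbase malt : α → ℝ)
    (hb1 : mbase a1 = 1 / 2 + Δ) (hb : ∀ a, a ≠ a1 → mbase a = 1 / 2)
    (ha1 : malt a1 = 1 / 2 + Δ) (ha0 : malt a0 = 1 / 2 + 2 * Δ)
    (ha : ∀ a, a ≠ a1 → a ≠ a0 → malt a = 1 / 2) :
    ((T : ℝ) * (1 / 2 + Δ) -
        ∑ h : Fin T → α × Bool,
          histProb T π (bern mbase) h * ∑ t : Fin T, mbase (h t).1) +
      ((T : ℝ) * (1 / 2 + 2 * Δ) -
        ∑ h : Fin T → α × Bool,
          histProb T π (bern malt) h * ∑ t : Fin T, malt (h t).1) ≥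
      ((T : ℝ) * Δ / 2) *
          (∑ h ∈ Finset.univ.filter
              (fun h : Fin T → α × Bool => 2 * numPlays T h a1 ≤ T),
            histProb T π (bern mbase) h) +
        ((T : ℝ) * Δ / 2) *
          (∑ h ∈ Finset.univ.filter
              (fun h : Fin T → α × Bool => T < 2 * numPlays T h a1),
            histProb T π (bern malt) h) :=
  two_environment_regret_bound_general a1 a0 Δ hΔ hΔ4 T π hπ0 hπ1 mbase malt hb1 hb ha1 ha0 ha
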